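/- arXiv:2312.16291 — 4 statements merged into one kernel-verified Lean document; each statement's English description precedes it below -/
import Mathlib

section
/- Let d ≥ 2, let y1, y2 ∈ ℝ^d with y1 ≠ 0, let s > 0 and k ∈ ℝ, and let S = {x ∈ ℝ^d : ‖x‖ = s and ⟪x, y1⟫ = k}. Let μ be a probability measure on ℝ^d whose support is contained in S and which is invariant under every linear isometry T of ℝ^d satisfying T y1 = y1 (the uniform distribution on S has this property). Then ∫ ⟪x, y2⟫ dμ(x) = k · ⟪y1, y2⟫ / ‖y1‖². -/
open MeasureTheory
open scoped RealInnerProductSpace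

/-!
Write `y2 = c • y1 + w` with `c = ⟪y1, y2⟫ / ‖y1‖²` and `w ⊥ y1`. The reflection in the
hyperplane `wᗮ` fixes `y1` and negates `w`, so invariance of `μ` forces `∫ ⟪x, w⟫ ∂μ = 0`,
while `∫ ⟪x, y1⟫ ∂μ = k` because `⟪x, y1⟫ = k` almost surely.
-/

section

variable {E : Type*} [NormedAddCommGroup E] [InnerProductSpace ℝ E]

theorem reflection_orthogonal_singleton_apply_of_mem_orthogonal {v w : E}
    (hw : w ∈ (ℝ ∙ v)ᗮ) : (ℝ ∙ w)ᗮ.reflection v = v :=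
  Submodule.reflection_mem_subspace_eq_self <| Submodule.mem_orthogonal_singleton_iff_inner_left.mpr
    (Submodule.mem_orthogonal_singleton_iff_inner_right.mp hw)

variable [MeasurableSpace E] [BorelSpace E] {μ : Measure E}

theorem integral_inner_eq_zero_of_map_reflection {w : E}
    (h : μ.map (Submodule.reflection (ℝ ∙ w)ᗮ) = μ) : ∫ x, ⟪x, w⟫ ∂μ = 0 := by
  set T := Submodule.reflection (ℝ ∙ w)ᗮ
  have hTw : T w = -w := Submodule.reflection_orthogonalComplement_singleton_eq_neg w
  have hflip : ∀ x, ⟪T x, w⟫ = -⟪x, w⟫ := fun x => by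
    simpa only [hTw, inner_neg_right, neg_eq_iff_eq_neg] using T.inner_map_map x w
  have hsymm : ∫ x, ⟪x, w⟫ ∂μ = -∫ x, ⟪x, w⟫ ∂μ := by
    calc ∫ x, ⟪x, w⟫ ∂μ = ∫ x, ⟪x, w⟫ ∂(μ.map T) := by rw [h]
      _ = ∫ x, ⟪T x, w⟫ ∂μ := T.toHomeomorph.measurableEmbedding.integral_map _
      _ = -∫ x, ⟪x, w⟫ ∂μ := by simp only [hflip, integral_neg]
  linarith

theorem integrable_inner_of_ae_norm_le [IsFiniteMeasure μ] {s : ℝ}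
    (h : ∀ᵐ x ∂μ, ‖x‖ ≤ s) (v : E) : Integrable (fun x => ⟪x, v⟫) μ := by
  refine Integrable.of_bound (continuous_id.inner continuous_const).aestronglyMeasurable
    (s * ‖v‖) ?_
  filter_upwards [h] with x hx
  exact (norm_inner_le_norm x v).trans (mul_le_mul_of_nonneg_right hx (norm_nonneg v))

end

theorem coupling_coefficient_expectation_general {d : ℕ}
    (y1 y2 : EuclideanSpace ℝ (Fin d))
    (s : ℝ) (k : ℝ)
    (μ : Measure (EuclideanSpace ℝ (Fin d))) [IsProbabilityMeasure μ]
    (hsupp : ∀ᵐ x ∂μ, ‖x‖ = s ∧ ⟪x, y1⟫ = k)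
    (hinv : ∀ T : EuclideanSpace ℝ (Fin d) ≃ₗᵢ[ℝ] EuclideanSpace ℝ (Fin d),
      T y1 = y1 → Measure.map T μ = μ) :
    ∫ x, ⟪x, y2⟫ ∂μ = k * ⟪y1, y2⟫ / ‖y1‖ ^ 2 := by
  set c := ⟪y1, y2⟫ / ‖y1‖ ^ 2
  set w := y2 - (ℝ ∙ y1).starProjection y2
  have hproj : (ℝ ∙ y1).starProjection y2 = c • y1 :=
    Submodule.starProjection_singleton ℝ y2
  have hy2 : y2 = c • y1 + w := by rw [← hproj, add_sub_cancel]
  have hdecomp : ∀ x, ⟪x, y2⟫ = c * ⟪x, y1⟫ + ⟪x, w⟫ := fun x => by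
    conv_lhs => rw [hy2, inner_add_right, real_inner_smul_right]
  have hw : ∫ x, ⟪x, w⟫ ∂μ = 0 := integral_inner_eq_zero_of_map_reflection <| hinv _ <|
    reflection_orthogonal_singleton_apply_of_mem_orthogonal
      (Submodule.sub_starProjection_mem_orthogonal y2)
  have hy1 : ∫ x, ⟪x, y1⟫ ∂μ = k := by
    rw [integral_congr_ae (hsupp.mono fun x hx => hx.2), integral_const, probReal_univ, one_smul]
  have hint := integrable_inner_of_ae_norm_le (hsupp.mono fun x hx => hx.1.le)
  calc ∫ x, ⟪x, y2⟫ ∂μ = c * ∫ x, ⟪x, y1⟫ ∂μ + ∫ x, ⟪x, w⟫ ∂μ := by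
        simp only [hdecomp]
        rw [integral_add ((hint y1).const_mul c) (hint w), integral_const_mul]
    _ = k * ⟪y1, y2⟫ / ‖y1‖ ^ 2 := by rw [hw, hy1]; ring

/-- **Expectation part of Theorem 2 (coupling coefficients).**
For a probability measure supported on the hypersphere
`{x : ‖x‖ = s, ⟪x, y1⟫ = k}` that is invariant under every linear isometry
fixing `y1`, the expected value of `⟪x, y2⟫` equals `k * ⟪y1, y2⟫ / ‖y1‖²`. -/
theorem coupling_coefficient_expectation {d : ℕ} (hd : 2 ≤ d)
    (y1 y2 : EuclideanSpace ℝ (Fin d)) (hy1 : y1 ≠ 0)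
    (s : ℝ) (hs : 0 < s) (k : ℝ)
    (μ : Measure (EuclideanSpace ℝ (Fin d))) [IsProbabilityMeasure μ]
    (hsupp : ∀ᵐ x ∂μ, ‖x‖ = s ∧ ⟪x, y1⟫ = k)
    (hinv : ∀ T : EuclideanSpace ℝ (Fin d) ≃ₗᵢ[ℝ] EuclideanSpace ℝ (Fin d),
      T y1 = y1 → Measure.map T μ = μ) :
    ∫ x, ⟪x, y2⟫ ∂μ = k * ⟪y1, y2⟫ / ‖y1‖ ^ 2 :=
  coupling_coefficient_expectation_general y1 y2 s k μ hsupp hinv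
end

section
/- Let d ≥ 2, let y1, y2 ∈ ℝ^d be nonzero, let s > 0 and k ∈ ℝ with |k| ≤ s·‖y1‖. Set cosθ = ⟪y1, y2⟫/(‖y1‖·‖y2‖) and sinθ = √(1 − cos²θ). Then the function x ↦ ⟪x, y2⟫ restricted to the set S = {x ∈ ℝ^d : ‖x‖ = s and ⟪x, y1⟫ = k} attains a maximum value equal to (‖y2‖/‖y1‖)·(k·cosθ + sinθ·√(s²‖y1‖² − k²)) and a minimum value equal to (‖y2‖/‖y1‖)·(k·cosθ − sinθ·√(s²‖y1‖² − k²)). -/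
/-!
Write `x = (k / ‖y1‖²) • y1 + v` with `v ⟂ y1`. On the slice, `‖v‖² = s² - k² / ‖y1‖²` is fixed
and `⟪x, y2⟫ = k ⟪y1, y2⟫ / ‖y1‖² + ⟪v, w⟫`, where `w` is the part of `y2` orthogonal to `y1`,
of norm `‖y2‖ sin θ`. Cauchy–Schwarz bounds `⟪v, w⟫` by `± ‖v‖ ‖w‖`, and `v = ± ‖v‖ w / ‖w‖`
attains the bound; when `w = 0` any `v ⟂ y1` does, and such a `v` exists because `d ≥ 2`.
-/

open scoped RealInnerProductSpace
open InnerProductGeometry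

variable {E : Type*} [NormedAddCommGroup E] [InnerProductSpace ℝ E]

def sphereSlice (y : E) (s k : ℝ) : Set E := {x | ‖x‖ = s ∧ ⟪x, y⟫ = k}

-- For `y = 0` this is `x`, as `⟪y, x⟫ / 0 = 0`.
noncomputable def orthogonalPart (y x : E) : E := x - (⟪y, x⟫ / ⟪y, y⟫) • y

theorem inner_orthogonalPart_mul (y x z : E) :
    ⟪orthogonalPart y x, orthogonalPart y z⟫ * ⟪y, y⟫ = ⟪x, z⟫ * ⟪y, y⟫ - ⟪y, x⟫ * ⟪y, z⟫ := by
  rcases eq_or_ne y 0 with rfl | hy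
  · simp
  have hyy : ⟪y, y⟫ ≠ 0 := inner_self_ne_zero.mpr hy
  simp only [orthogonalPart, inner_sub_left, inner_sub_right, real_inner_smul_left,
    real_inner_smul_right, real_inner_comm x y, real_inner_comm z y]
  field_simp
  ring

theorem inner_orthogonalPart_self (y x : E) : ⟪y, orthogonalPart y x⟫ = 0 := by
  rcases eq_or_ne y 0 with rfl | hy
  · simp
  rw [orthogonalPart, inner_sub_right, real_inner_smul_right,
    div_mul_cancel₀ _ (inner_self_ne_zero.mpr hy), sub_self]

theorem inner_orthogonalPart_of_inner_eq_zero {y v : E} (h : ⟪y, v⟫ = 0) (z : E) :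
    ⟪v, orthogonalPart y z⟫ = ⟪v, z⟫ := by
  rw [orthogonalPart, inner_sub_right, real_inner_smul_right, real_inner_comm y v, h, mul_zero,
    sub_zero]

-- The Gram determinant of `x, y, z` is nonnegative.
theorem sq_inner_mul_inner_self_sub_le (y x z : E) :
    (⟪x, z⟫ * ⟪y, y⟫ - ⟪y, x⟫ * ⟪y, z⟫) ^ 2 ≤
      (⟪y, y⟫ * ⟪x, x⟫ - ⟪y, x⟫ * ⟪y, x⟫) * (⟪y, y⟫ * ⟪z, z⟫ - ⟪y, z⟫ * ⟪y, z⟫) := by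
  set px := orthogonalPart y x
  set pz := orthogonalPart y z
  calc (⟪x, z⟫ * ⟪y, y⟫ - ⟪y, x⟫ * ⟪y, z⟫) ^ 2 = ⟪px, pz⟫ * ⟪px, pz⟫ * ⟪y, y⟫ ^ 2 := by
        rw [← inner_orthogonalPart_mul]; ring
    _ ≤ ⟪px, px⟫ * ⟪pz, pz⟫ * ⟪y, y⟫ ^ 2 :=
        mul_le_mul_of_nonneg_right (real_inner_mul_inner_self_le px pz) (sq_nonneg _)
    _ = _ := by
        rw [mul_comm ⟪y, y⟫ ⟪x, x⟫, mul_comm ⟪y, y⟫ ⟪z, z⟫, ← inner_orthogonalPart_mul,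
          ← inner_orthogonalPart_mul]
        ring

theorem abs_inner_mul_inner_self_sub_le (y x z : E) :
    |⟪x, z⟫ * ⟪y, y⟫ - ⟪y, x⟫ * ⟪y, z⟫| ≤
      √(⟪y, y⟫ * ⟪x, x⟫ - ⟪y, x⟫ * ⟪y, x⟫) * √(⟪y, y⟫ * ⟪z, z⟫ - ⟪y, z⟫ * ⟪y, z⟫) := by
  rw [← Real.sqrt_mul' _ (by nlinarith [real_inner_mul_inner_self_le y z])]
  exact Real.abs_le_sqrt (sq_inner_mul_inner_self_sub_le y x z)

theorem norm_orthogonalPart_mul_norm (y z : E) :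
    ‖orthogonalPart y z‖ * ‖y‖ = √(‖y‖ ^ 2 * ‖z‖ ^ 2 - ⟪y, z⟫ ^ 2) := by
  have h := inner_orthogonalPart_mul y z z
  simp only [real_inner_self_eq_norm_sq, ← sq] at h
  rw [mul_comm (‖y‖ ^ 2), ← h, ← mul_pow, Real.sqrt_sq (by positivity)]

theorem exists_norm_eq_one_inner_eq_zero (hE : 2 ≤ Module.finrank ℝ E) (y : E) :
    ∃ v : E, ‖v‖ = 1 ∧ ⟪y, v⟫ = 0 := by
  have : FiniteDimensional ℝ E := Module.finite_of_finrank_pos (by omega)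
  have hK : 0 < Module.finrank ℝ (ℝ ∙ y)ᗮ := by
    have := (ℝ ∙ y).finrank_add_finrank_orthogonal
    have := finrank_span_le_card (R := ℝ) ({y} : Set E)
    simp only [Set.toFinset_singleton, Finset.card_singleton] at this
    omega
  have : Nontrivial (ℝ ∙ y)ᗮ := Module.finrank_pos_iff.mp hK
  obtain ⟨v, hv⟩ := exists_norm_eq (ℝ ∙ y)ᗮ zero_le_one
  exact ⟨v, hv, Submodule.inner_right_of_mem_orthogonal (Submodule.mem_span_singleton_self y) v.2⟩

theorem exists_norm_eq_one_inner_eq_zero_inner_eq (hE : 2 ≤ Module.finrank ℝ E) (y z : E) :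
    ∃ v : E, ‖v‖ = 1 ∧ ⟪y, v⟫ = 0 ∧ ⟪v, z⟫ = ‖orthogonalPart y z‖ := by
  rcases eq_or_ne (orthogonalPart y z) 0 with hw | hw
  · obtain ⟨v, hv, hyv⟩ := exists_norm_eq_one_inner_eq_zero hE y
    refine ⟨v, hv, hyv, ?_⟩
    rw [← inner_orthogonalPart_of_inner_eq_zero hyv, hw, inner_zero_right, norm_zero]
  · set w := orthogonalPart y z
    have hyw : ⟪y, w⟫ = 0 := inner_orthogonalPart_self y z
    refine ⟨‖w‖⁻¹ • w, ?_, ?_, ?_⟩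
    · rw [norm_smul, norm_inv, norm_norm, inv_mul_cancel₀ (norm_ne_zero_iff.mpr hw)]
    · rw [real_inner_smul_right, hyw, mul_zero]
    · rw [real_inner_smul_left, ← inner_orthogonalPart_of_inner_eq_zero hyw,
        real_inner_self_eq_norm_sq]
      field_simp

theorem norm_div_norm_mul_cos_angle_add_sin_angle_mul {y1 : E} (hy1 : y1 ≠ 0) (y2 : E)
    (k D : ℝ) :
    ‖y2‖ / ‖y1‖ * (k * Real.cos (angle y1 y2) + Real.sin (angle y1 y2) * D) =
      (k * ⟪y1, y2⟫ + D * √(‖y1‖ ^ 2 * ‖y2‖ ^ 2 - ⟪y1, y2⟫ ^ 2)) / ‖y1‖ ^ 2 := by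
  have hsin := sin_angle_mul_norm_mul_norm y1 y2
  simp only [real_inner_self_eq_norm_sq, ← sq] at hsin
  rw [← hsin, ← cos_angle_mul_norm_mul_norm y1 y2]
  have : ‖y1‖ ≠ 0 := norm_ne_zero_iff.mpr hy1
  field_simp

theorem abs_inner_mul_sub_le_of_mem_sphereSlice {x y1 : E} {s k : ℝ}
    (hx : x ∈ sphereSlice y1 s k) (y2 : E) :
    |⟪x, y2⟫ * ‖y1‖ ^ 2 - k * ⟪y1, y2⟫| ≤
      √(s ^ 2 * ‖y1‖ ^ 2 - k ^ 2) * √(‖y1‖ ^ 2 * ‖y2‖ ^ 2 - ⟪y1, y2⟫ ^ 2) := by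
  have h := abs_inner_mul_inner_self_sub_le y1 x y2
  rw [real_inner_comm x y1, hx.2] at h
  simp only [real_inner_self_eq_norm_sq, hx.1, ← sq] at h
  rwa [mul_comm (‖y1‖ ^ 2) (s ^ 2)] at h

theorem exists_mem_sphereSlice_inner_mul_eq (hE : 2 ≤ Module.finrank ℝ E) {y1 : E}
    (hy1 : y1 ≠ 0) {s k c : ℝ} (hs : 0 ≤ s) (hc : c ^ 2 = s ^ 2 * ‖y1‖ ^ 2 - k ^ 2) (y2 : E) :
    ∃ x ∈ sphereSlice y1 s k,
      ⟪x, y2⟫ * ‖y1‖ ^ 2 = k * ⟪y1, y2⟫ + c * √(‖y1‖ ^ 2 * ‖y2‖ ^ 2 - ⟪y1, y2⟫ ^ 2) := by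
  obtain ⟨v, hv, hy1v, hvy2⟩ := exists_norm_eq_one_inner_eq_zero_inner_eq hE y1 y2
  have hN : ‖y1‖ ≠ 0 := norm_ne_zero_iff.mpr hy1
  have hv1 : ⟪v, y1⟫ = 0 := by rwa [real_inner_comm]
  set x := (k / ‖y1‖ ^ 2) • y1 + (c / ‖y1‖) • v
  have hx : ‖x‖ ^ 2 = s ^ 2 := by
    rw [norm_add_sq_real, real_inner_smul_left, real_inner_smul_right, hy1v, norm_smul,
      norm_smul, hv, Real.norm_eq_abs, Real.norm_eq_abs, mul_pow, mul_pow, sq_abs, sq_abs]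
    field_simp
    linear_combination ‖y1‖ * hc
  refine ⟨x, ⟨?_, ?_⟩, ?_⟩
  · exact (pow_left_inj₀ (norm_nonneg x) hs two_ne_zero).mp hx
  · rw [inner_add_left, real_inner_smul_left, real_inner_smul_left, real_inner_self_eq_norm_sq,
      hv1, mul_zero, add_zero]
    field_simp
  · rw [inner_add_left, real_inner_smul_left, real_inner_smul_left, hvy2,
      ← norm_orthogonalPart_mul_norm]
    field_simp

theorem isGreatest_inner_sphereSlice (hE : 2 ≤ Module.finrank ℝ E) {y1 : E} (hy1 : y1 ≠ 0)
    {s k : ℝ} (hk : |k| ≤ s * ‖y1‖) (y2 : E) :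
    IsGreatest ((fun x => ⟪x, y2⟫) '' sphereSlice y1 s k)
      (‖y2‖ / ‖y1‖ * (k * Real.cos (angle y1 y2) +
        Real.sin (angle y1 y2) * √(s ^ 2 * ‖y1‖ ^ 2 - k ^ 2))) := by
  have hN : 0 < ‖y1‖ := norm_pos_iff.mpr hy1
  have hs : 0 ≤ s := nonneg_of_mul_nonneg_left ((abs_nonneg k).trans hk) hN
  have hD : √(s ^ 2 * ‖y1‖ ^ 2 - k ^ 2) ^ 2 = s ^ 2 * ‖y1‖ ^ 2 - k ^ 2 :=
    Real.sq_sqrt (by nlinarith [sq_abs k, abs_nonneg k])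
  rw [norm_div_norm_mul_cos_angle_add_sin_angle_mul hy1]
  obtain ⟨x, hx, hxy2⟩ := exists_mem_sphereSlice_inner_mul_eq hE hy1 hs hD y2
  refine ⟨⟨x, hx, (eq_div_iff (by positivity)).mpr hxy2⟩, ?_⟩
  rintro _ ⟨z, hz, rfl⟩
  have := (abs_le.mp (abs_inner_mul_sub_le_of_mem_sphereSlice hz y2)).2
  rw [le_div_iff₀ (by positivity)]
  linarith

theorem isLeast_inner_sphereSlice (hE : 2 ≤ Module.finrank ℝ E) {y1 : E} (hy1 : y1 ≠ 0)
    {s k : ℝ} (hk : |k| ≤ s * ‖y1‖) (y2 : E) :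
    IsLeast ((fun x => ⟪x, y2⟫) '' sphereSlice y1 s k)
      (‖y2‖ / ‖y1‖ * (k * Real.cos (angle y1 y2) -
        Real.sin (angle y1 y2) * √(s ^ 2 * ‖y1‖ ^ 2 - k ^ 2))) := by
  have hN : 0 < ‖y1‖ := norm_pos_iff.mpr hy1
  have hs : 0 ≤ s := nonneg_of_mul_nonneg_left ((abs_nonneg k).trans hk) hN
  have hD : (-√(s ^ 2 * ‖y1‖ ^ 2 - k ^ 2)) ^ 2 = s ^ 2 * ‖y1‖ ^ 2 - k ^ 2 := by
    rw [neg_sq, Real.sq_sqrt (by nlinarith [sq_abs k, abs_nonneg k])]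
  rw [sub_eq_add_neg, ← mul_neg, norm_div_norm_mul_cos_angle_add_sin_angle_mul hy1]
  obtain ⟨x, hx, hxy2⟩ := exists_mem_sphereSlice_inner_mul_eq hE hy1 hs hD y2
  refine ⟨⟨x, hx, (eq_div_iff (by positivity)).mpr hxy2⟩, ?_⟩
  rintro _ ⟨z, hz, rfl⟩
  have := (abs_le.mp (abs_inner_mul_sub_le_of_mem_sphereSlice hz y2)).1
  rw [div_le_iff₀ (by positivity)]
  linarith

theorem coupling_extremal_values_general {d : ℕ} (hd : 2 ≤ d)
    (y1 y2 : EuclideanSpace ℝ (Fin d)) (hy1 : y1 ≠ 0)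
    (s k : ℝ) (hk : |k| ≤ s * ‖y1‖)
    (S : Set (EuclideanSpace ℝ (Fin d)))
    (hS : S = {x | ‖x‖ = s ∧ ⟪x, y1⟫ = k})
    (cosθ sinθ : ℝ)
    (hcos : cosθ = ⟪y1, y2⟫ / (‖y1‖ * ‖y2‖))
    (hsin : sinθ = Real.sqrt (1 - cosθ ^ 2)) :
    (∃ x ∈ S, ⟪x, y2⟫ = ‖y2‖ / ‖y1‖ *
        (k * cosθ + sinθ * Real.sqrt (s ^ 2 * ‖y1‖ ^ 2 - k ^ 2)) ∧
      ∀ z ∈ S, ⟪z, y2⟫ ≤ ⟪x, y2⟫) ∧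
    (∃ x ∈ S, ⟪x, y2⟫ = ‖y2‖ / ‖y1‖ *
        (k * cosθ - sinθ * Real.sqrt (s ^ 2 * ‖y1‖ ^ 2 - k ^ 2)) ∧
      ∀ z ∈ S, ⟪x, y2⟫ ≤ ⟪z, y2⟫) := by
  have hcos' : cosθ = Real.cos (angle y1 y2) := by rw [hcos, cos_angle]
  have hsin' : sinθ = Real.sin (angle y1 y2) := by rw [hsin, hcos, angle, Real.sin_arccos]
  have hE : 2 ≤ Module.finrank ℝ (EuclideanSpace ℝ (Fin d)) := by
    rwa [finrank_euclideanSpace_fin]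
  subst hS hcos' hsin'
  obtain ⟨⟨x, hxS, hx⟩, hmax⟩ := isGreatest_inner_sphereSlice hE hy1 hk y2
  obtain ⟨⟨x', hx'S, hx'⟩, hmin⟩ := isLeast_inner_sphereSlice hE hy1 hk y2
  exact ⟨⟨x, hxS, hx, fun z hz => (hmax ⟨z, hz, rfl⟩).trans_eq hx.symm⟩,
    ⟨x', hx'S, hx', fun z hz => hx'.trans_le (hmin ⟨z, hz, rfl⟩)⟩⟩

/-- **Extremal part of Theorem 2.** The maximum and minimum of `⟪x, y2⟫` subject to
`‖x‖ = s` and `⟪x, y1⟫ = k` are `(‖y2‖/‖y1‖) (k cos θ ± sin θ √(s²‖y1‖² − k²))`,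
where `θ` is the angle between `y1` and `y2`. -/
theorem coupling_extremal_values {d : ℕ} (hd : 2 ≤ d)
    (y1 y2 : EuclideanSpace ℝ (Fin d)) (hy1 : y1 ≠ 0) (hy2 : y2 ≠ 0)
    (s k : ℝ) (hs : 0 < s) (hk : |k| ≤ s * ‖y1‖)
    (S : Set (EuclideanSpace ℝ (Fin d)))
    (hS : S = {x | ‖x‖ = s ∧ ⟪x, y1⟫ = k})
    (cosθ sinθ : ℝ)
    (hcos : cosθ = ⟪y1, y2⟫ / (‖y1‖ * ‖y2‖))
    (hsin : sinθ = Real.sqrt (1 - cosθ ^ 2)) :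
    (∃ x ∈ S, ⟪x, y2⟫ = ‖y2‖ / ‖y1‖ *
        (k * cosθ + sinθ * Real.sqrt (s ^ 2 * ‖y1‖ ^ 2 - k ^ 2)) ∧
      ∀ z ∈ S, ⟪z, y2⟫ ≤ ⟪x, y2⟫) ∧
    (∃ x ∈ S, ⟪x, y2⟫ = ‖y2‖ / ‖y1‖ *
        (k * cosθ - sinθ * Real.sqrt (s ^ 2 * ‖y1‖ ^ 2 - k ^ 2)) ∧
      ∀ z ∈ S, ⟪x, y2⟫ ≤ ⟪z, y2⟫) :=
  coupling_extremal_values_general hd y1 y2 hy1 s k hk S hS cosθ sinθ hcos hsin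
end

section
/- Let d ≥ 8 and fix x ∈ ℝ^d with P x ≠ 0. For n ∈ ℝ^d define Q_x n = n − (⟪P x, n⟫/‖P x‖²)·P x, and define θ(x, n) = angle(n, P(Q_x n)). Then ∫ θ(x, n) dγ(n) < 2·arccos(√(1 − 1/(d−1))). -/
/-!
Write `P (Q_x n) = n - ⟪e₁, n⟫ e₁ - ⟪e₂, n⟫ e₂` with `e₁ = P x / ‖P x‖` and `e₂ = 𝟙 / √d`,
an orthonormal pair. For `ρ = ‖⟪e₁, n⟫ e₁ + ⟪e₂, n⟫ e₂‖ / ‖n‖` the angle `θ` between `n` and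
`P (Q_x n)` lies in `[0, π/2]` with `sin θ = ρ`, and `θ ≤ sin θ + sin² θ` there, so `θ ≤ ρ + ρ²`.
By rotation invariance of the Gaussian, `E[⟪u, n⟫² / ‖n‖²]` is the same for every unit vector `u`;
summing over an orthonormal basis shows it is `1/d`, hence `E[ρ²] = 2/d` and, by Jensen,
`E[ρ] ≤ √(2/d)`. Finally `√(2/d) + 2/d < 2/√(d-1) ≤ 2 arccos √(1 - 1/(d-1))` for `d ≥ 8`.
-/

open MeasureTheory ProbabilityTheory
open scoped RealInnerProductSpace

/-- The standard Gaussian measure `N(0, I)` on `ℝ^d`. -/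
noncomputable def stdGaussian (d : ℕ) : Measure (EuclideanSpace ℝ (Fin d)) :=
  Measure.map (MeasurableEquiv.toLp 2 (Fin d → ℝ))
    (Measure.pi fun _ : Fin d => gaussianReal 0 1)

/-- The all-ones vector `𝟙 ∈ ℝ^d`. -/
noncomputable def allOnes (d : ℕ) : EuclideanSpace ℝ (Fin d) :=
  (WithLp.equiv 2 (Fin d → ℝ)).symm (fun _ => 1)

/-- The mean-centering map `P x = x − ((∑ i, x i)/d) • 𝟙`, the orthogonal projection
onto the hyperplane orthogonal to `𝟙`. -/
noncomputable def meanCenter {d : ℕ} (x : EuclideanSpace ℝ (Fin d)) :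
    EuclideanSpace ℝ (Fin d) :=
  x - ((∑ i, x i) / d) • allOnes d

open Real InnerProductGeometry

lemma le_sin_add_sin_sq {θ : ℝ} (h0 : 0 ≤ θ) (h1 : θ ≤ π / 2) : θ ≤ sin θ + sin θ ^ 2 := by
  have hcube : θ - θ ^ 3 / 6 ≤ sin θ := sin_ge_sub_cube h0
  have hjordan : 2 / π * θ ≤ sin θ := mul_le_sin h0 h1
  have hθπ : θ * π ^ 2 ≤ 24 := by nlinarith [pi_lt_d2, pi_pos]
  have : θ ^ 3 / 6 ≤ (2 / π * θ) ^ 2 := by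
    rw [div_mul_eq_mul_div, div_pow, le_div_iff₀ (by positivity)]
    nlinarith [mul_le_mul_of_nonneg_left hθπ (sq_nonneg θ)]
  nlinarith [pow_le_pow_left₀ (by positivity) hjordan 2]

lemma sqrt_two_div_add_two_div_lt {D : ℝ} (hD : 8 ≤ D) :
    √(2 / D) + 2 / D < 2 * √(1 / (D - 1)) := by
  have hb0 : 0 < √(D - 1) := Real.sqrt_pos.2 (by linarith)
  rw [one_div, Real.sqrt_inv, ← div_eq_mul_inv, lt_div_iff₀ hb0]
  set a := √(2 / D) with ha
  rw [← Real.sq_sqrt (show 0 ≤ 2 / D by positivity), ← ha]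
  set b := √(D - 1) with hb
  -- `(a + a²) b < 2` with `a² (b² + 1) = 2` reduces, after squaring, to `(b² + 1)(b - 2)² > 2`.
  have ha0 : 0 < a := Real.sqrt_pos.2 (by positivity)
  have hab : a ^ 2 * (b ^ 2 + 1) = 2 := by
    rw [ha, hb, Real.sq_sqrt (by positivity), Real.sq_sqrt (by linarith)]; field_simp; ring
  have hb7 : 7 ≤ b ^ 2 := by rw [hb, Real.sq_sqrt (by linarith)]; linarith
  have hb26 : 2.6 ≤ b := by nlinarith
  have hpoly : 2 < (b ^ 2 + 1) * (b - 2) ^ 2 := by nlinarith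
  have hrhs : 0 < 2 - a ^ 2 * b := by nlinarith
  have : (a * b) ^ 2 < (2 - a ^ 2 * b) ^ 2 := by nlinarith
  nlinarith [lt_of_pow_lt_pow_left₀ 2 hrhs.le this]

lemma sqrt_le_arccos_sqrt_one_sub {ε : ℝ} (h1 : ε ≤ 1) :
    √ε ≤ arccos √(1 - ε) := by
  calc √ε = sin (arccos √(1 - ε)) := by
        rw [sin_arccos, Real.sq_sqrt (by linarith), sub_sub_cancel]
    _ ≤ arccos √(1 - ε) := sin_le (arccos_nonneg _)

section Geometry
variable {E : Type*} [NormedAddCommGroup E] [InnerProductSpace ℝ E]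

lemma angle_add_le_of_inner_eq_zero {x y : E} (h : ⟪x, y⟫ = 0) (h0 : x + y ≠ 0) :
    angle (x + y) x ≤ ‖y‖ / ‖x + y‖ + (‖y‖ / ‖x + y‖) ^ 2 := by
  have hxy : x ≠ 0 ∨ y ≠ 0 := by
    by_contra! h'
    simp [h'.1, h'.2] at h0
  rw [angle_comm, ← sin_angle_add_of_inner_eq_zero h hxy]
  exact le_sin_add_sin_sq (angle_nonneg _ _) (angle_add_le_pi_div_two_of_inner_eq_zero h)

variable {ι : Type*} [Fintype ι] {e : ι → E}

lemma Orthonormal.inner_sub_sum_inner_smul (he : Orthonormal ℝ e) (n : E) :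
    ⟪n - ∑ i, ⟪e i, n⟫ • e i, ∑ i, ⟪e i, n⟫ • e i⟫ = 0 := by
  simp only [inner_sub_left, inner_sum, real_inner_smul_right, he.inner_left_fintype,
    conj_trivial, real_inner_comm n, sub_self, Finset.sum_const_zero]

lemma Orthonormal.norm_sum_inner_smul_sq (he : Orthonormal ℝ e) (n : E) :
    ‖∑ i, ⟪e i, n⟫ • e i‖ ^ 2 = ∑ i, ⟪e i, n⟫ ^ 2 := by
  rw [← real_inner_self_eq_norm_sq]
  simp only [inner_sum, real_inner_smul_right, he.inner_left_fintype, conj_trivial, sq]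

lemma Orthonormal.norm_sum_inner_smul_le (he : Orthonormal ℝ e) (n : E) :
    ‖∑ i, ⟪e i, n⟫ • e i‖ ≤ ‖n‖ := by
  rw [← pow_le_pow_iff_left₀ (norm_nonneg _) (norm_nonneg _) two_ne_zero,
    he.norm_sum_inner_smul_sq]
  simpa using he.sum_inner_products_le (s := Finset.univ) (x := n)

lemma Orthonormal.angle_sub_sum_inner_smul_le (he : Orthonormal ℝ e) {n : E} (hn : n ≠ 0) :
    angle n (n - ∑ i, ⟪e i, n⟫ • e i) ≤
      ‖∑ i, ⟪e i, n⟫ • e i‖ / ‖n‖ + (‖∑ i, ⟪e i, n⟫ • e i‖ / ‖n‖) ^ 2 := by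
  have h := angle_add_le_of_inner_eq_zero (he.inner_sub_sum_inner_smul n)
  rw [sub_add_cancel] at h
  exact h hn

end Geometry

section Gaussian
variable {E : Type*} [NormedAddCommGroup E] [InnerProductSpace ℝ E] [FiniteDimensional ℝ E]
  [MeasurableSpace E] [BorelSpace E]

lemma integral_comp_linearIsometryEquiv_stdGaussian (f : E ≃ₗᵢ[ℝ] E) (g : E → ℝ) :
    ∫ n, g (f n) ∂stdGaussian E = ∫ n, g n ∂stdGaussian E :=
  (⟨f.continuous.measurable, stdGaussian_map f⟩ : MeasurePreserving f _ _).integral_comp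
    f.toHomeomorph.measurableEmbedding g

lemma map_inner_stdGaussian {u : E} (hu : ‖u‖ = 1) :
    (stdGaussian E).map (fun n ↦ ⟪u, n⟫) = gaussianReal 0 1 := by
  have := IsGaussian.map_eq_gaussianReal (μ := stdGaussian E) (innerSL ℝ u)
  rw [integral_strongDual_stdGaussian, variance_dual_stdGaussian, innerSL_apply_norm, hu] at this
  simpa using this

instance nullSingletonClass_stdGaussian [Nontrivial E] : NullSingletonClass (stdGaussian E) := by
  obtain ⟨u, hu⟩ := exists_norm_eq E zero_le_one
  have : NullSingletonClass (gaussianReal 0 1) := nullSingletonClass_gaussianReal one_ne_zero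
  refine ⟨fun x ↦ measure_mono_null (t := (⟪u, ·⟫) ⁻¹' {⟪u, x⟫}) (by simp) ?_⟩
  rw [← Measure.map_apply (by fun_prop) (measurableSet_singleton _), map_inner_stdGaussian hu]
  exact measure_singleton _

lemma integrable_inner_sq_div_norm_sq_stdGaussian {u : E} (hu : ‖u‖ = 1) :
    Integrable (fun n ↦ ⟪u, n⟫ ^ 2 / ‖n‖ ^ 2) (stdGaussian E) := by
  refine Integrable.of_bound (by fun_prop : Measurable _).aestronglyMeasurable 1
    (ae_of_all _ fun n ↦ ?_)
  rw [Real.norm_of_nonneg (by positivity)]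
  refine div_le_one_of_le₀ ?_ (by positivity)
  simpa [hu, sq_abs] using pow_le_pow_left₀ (abs_nonneg _) (abs_real_inner_le_norm u n) 2

lemma integral_inner_sq_div_norm_sq_stdGaussian_eq {u w : E} (hu : ‖u‖ = 1) (hw : ‖w‖ = 1) :
    ∫ n, ⟪u, n⟫ ^ 2 / ‖n‖ ^ 2 ∂stdGaussian E = ∫ n, ⟪w, n⟫ ^ 2 / ‖n‖ ^ 2 ∂stdGaussian E := by
  set R := (ℝ ∙ (w - u))ᗮ.reflection
  have hRw : R w = u := Submodule.reflection_sub (hw.trans hu.symm)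
  rw [← integral_comp_linearIsometryEquiv_stdGaussian R]
  congr with n
  rw [← hRw, R.inner_map_map, R.norm_map]

lemma integral_inner_sq_div_norm_sq_stdGaussian [Nontrivial E] {u : E} (hu : ‖u‖ = 1) :
    ∫ n, ⟪u, n⟫ ^ 2 / ‖n‖ ^ 2 ∂stdGaussian E = 1 / Module.finrank ℝ E := by
  set b := stdOrthonormalBasis ℝ E
  have hsum : ∑ i, ∫ n, ⟪b i, n⟫ ^ 2 / ‖n‖ ^ 2 ∂stdGaussian E = 1 := by
    rw [← integral_finsetSum _ fun i _ ↦
      integrable_inner_sq_div_norm_sq_stdGaussian (b.orthonormal.norm_eq_one i)]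
    rw [integral_congr_ae (g := fun _ ↦ 1), integral_const, probReal_univ, one_smul]
    filter_upwards [Measure.ae_ne _ 0] with n hn
    rw [← Finset.sum_div, b.sum_sq_inner_right, div_self (by positivity)]
  simp_rw [integral_inner_sq_div_norm_sq_stdGaussian_eq (b.orthonormal.norm_eq_one _) hu,
    Finset.sum_const, Finset.card_univ, Fintype.card_fin, nsmul_eq_mul] at hsum
  rw [eq_div_iff (by simp [Module.finrank_pos.ne']), mul_comm, hsum]

lemma integral_le_sqrt_integral_sq {Ω : Type*} [MeasurableSpace Ω] {μ : Measure Ω}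
    [IsProbabilityMeasure μ] {f : Ω → ℝ} (hf : Integrable f μ)
    (hf2 : Integrable (fun x ↦ f x ^ 2) μ) :
    ∫ x, f x ∂μ ≤ √(∫ x, f x ^ 2 ∂μ) :=
  Real.le_sqrt_of_sq_le <| (even_two.convexOn_pow).map_integral_le (continuous_pow 2).continuousOn
    isClosed_univ (ae_of_all _ fun _ ↦ Set.mem_univ _) hf hf2

theorem Orthonormal.integral_angle_sub_sum_inner_smul_le [Nontrivial E] {ι : Type*} [Fintype ι]
    {e : ι → E} (he : Orthonormal ℝ e) :
    ∫ n, angle n (n - ∑ i, ⟪e i, n⟫ • e i) ∂stdGaussian E ≤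
      √(Fintype.card ι / Module.finrank ℝ E) + Fintype.card ι / Module.finrank ℝ E := by
  set ρ : E → ℝ := fun n ↦ ‖∑ i, ⟪e i, n⟫ • e i‖ / ‖n‖
  have hρ_int : Integrable ρ (stdGaussian E) := by
    refine Integrable.of_bound (by fun_prop : Measurable ρ).aestronglyMeasurable 1
      (ae_of_all _ fun n ↦ ?_)
    rw [Real.norm_of_nonneg (by positivity)]
    exact div_le_one_of_le₀ (he.norm_sum_inner_smul_le n) (norm_nonneg n)
  have hρ_sq : (fun n ↦ ρ n ^ 2) = fun n ↦ ∑ i, ⟪e i, n⟫ ^ 2 / ‖n‖ ^ 2 := by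
    ext n
    simp only [ρ, div_pow, he.norm_sum_inner_smul_sq, Finset.sum_div]
  have hρ_sq_int : Integrable (fun n ↦ ρ n ^ 2) (stdGaussian E) := by
    rw [hρ_sq]
    exact integrable_finsetSum _ fun i _ ↦
      integrable_inner_sq_div_norm_sq_stdGaussian (he.norm_eq_one i)
  have hρ_sq_integral : ∫ n, ρ n ^ 2 ∂stdGaussian E = Fintype.card ι / Module.finrank ℝ E := by
    rw [hρ_sq, integral_finsetSum _ fun i _ ↦
      integrable_inner_sq_div_norm_sq_stdGaussian (he.norm_eq_one i)]
    simp_rw [integral_inner_sq_div_norm_sq_stdGaussian (he.norm_eq_one _), Finset.sum_const,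
      Finset.card_univ, nsmul_eq_mul, mul_one_div]
  calc ∫ n, angle n (n - ∑ i, ⟪e i, n⟫ • e i) ∂stdGaussian E
      ≤ ∫ n, ρ n + ρ n ^ 2 ∂stdGaussian E := by
        refine integral_mono_of_nonneg (ae_of_all _ fun n ↦ angle_nonneg _ _)
          (hρ_int.add hρ_sq_int) ?_
        filter_upwards [Measure.ae_ne _ 0] with n hn
        exact he.angle_sub_sum_inner_smul_le hn
    _ = ∫ n, ρ n ∂stdGaussian E + ∫ n, ρ n ^ 2 ∂stdGaussian E := integral_add hρ_int hρ_sq_int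
    _ ≤ _ := by
        rw [← hρ_sq_integral]
        gcongr
        exact integral_le_sqrt_integral_sq hρ_int hρ_sq_int

end Gaussian

section MeanCenter
variable {d : ℕ}

lemma stdGaussian_eq_stdGaussian_euclideanSpace (d : ℕ) :
    _root_.stdGaussian d = ProbabilityTheory.stdGaussian (EuclideanSpace ℝ (Fin d)) :=
  map_pi_eq_stdGaussian

lemma inner_allOnes_left (z : EuclideanSpace ℝ (Fin d)) : ⟪allOnes d, z⟫ = ∑ i, z i := by
  simp [allOnes, PiLp.inner_apply]

lemma norm_allOnes (d : ℕ) : ‖allOnes d‖ = √d := by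
  simp [allOnes, EuclideanSpace.norm_eq]

lemma inner_meanCenter_allOnes (hd : d ≠ 0) (x : EuclideanSpace ℝ (Fin d)) :
    ⟪meanCenter x, allOnes d⟫ = 0 := by
  rw [real_inner_comm, meanCenter, inner_sub_right, real_inner_smul_right,
    real_inner_self_eq_norm_sq, norm_allOnes, sq_sqrt (Nat.cast_nonneg d), inner_allOnes_left]
  field_simp
  ring

lemma meanCenter_eq_sub_inner_smul (hd : d ≠ 0) (z : EuclideanSpace ℝ (Fin d)) :
    meanCenter z = z - ⟪(√d)⁻¹ • allOnes d, z⟫ • (√d)⁻¹ • allOnes d := by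
  rw [meanCenter, real_inner_smul_left, inner_allOnes_left, smul_smul]
  congr 2
  field_simp
  rw [sq_sqrt (Nat.cast_nonneg d)]

lemma orthonormal_normalize_meanCenter_allOnes (hd : d ≠ 0) {x : EuclideanSpace ℝ (Fin d)}
    (hx : meanCenter x ≠ 0) :
    Orthonormal ℝ ![‖meanCenter x‖⁻¹ • meanCenter x, (√d)⁻¹ • allOnes d] := by
  simp [norm_smul, norm_allOnes, hx, hd, real_inner_smul_left, real_inner_smul_right,
    inner_meanCenter_allOnes hd, abs_of_nonneg (sqrt_nonneg (d : ℝ))]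

lemma meanCenter_sub_inner_smul_meanCenter (hd : d ≠ 0) (x n : EuclideanSpace ℝ (Fin d)) :
    meanCenter (n - (⟪meanCenter x, n⟫ / ‖meanCenter x‖ ^ 2) • meanCenter x) =
      n - ∑ i, ⟪![‖meanCenter x‖⁻¹ • meanCenter x, (√d)⁻¹ • allOnes d] i, n⟫ •
        ![‖meanCenter x‖⁻¹ • meanCenter x, (√d)⁻¹ • allOnes d] i := by
  rw [meanCenter_eq_sub_inner_smul hd (n - _)]
  simp only [Fin.sum_univ_two, Matrix.cons_val_zero, Matrix.cons_val_one, inner_sub_right,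
    real_inner_smul_right, real_inner_smul_left, real_inner_comm (meanCenter x),
    inner_meanCenter_allOnes hd]
  module

end MeanCenter

/-- **Theorem 1 of the paper, explicit form.** For `n ~ N(0, I)` in `ℝ^d` with `d ≥ 8`,
with `Q_x n = n − (⟪P x, n⟫/‖P x‖²) • P x`, the expected angle between `n` and
`P (Q_x n)` (a positive multiple of the LayerNorm gradient at `x`) is less than
`2 arccos √(1 − 1/(d−1))`. -/
theorem layerNorm_expected_angle_explicit {d : ℕ} (hd : 8 ≤ d)
    (x : EuclideanSpace ℝ (Fin d)) (hx : meanCenter x ≠ 0) :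
    ∫ n, InnerProductGeometry.angle n
        (meanCenter (n - (⟪meanCenter x, n⟫ / ‖meanCenter x‖ ^ 2) • meanCenter x))
        ∂(stdGaussian d)
      < 2 * Real.arccos (Real.sqrt (1 - 1 / ((d : ℝ) - 1))) := by
  have hd0 : d ≠ 0 := by omega
  have : NeZero d := ⟨hd0⟩
  have hdR : (8 : ℝ) ≤ d := by exact_mod_cast hd
  rw [stdGaussian_eq_stdGaussian_euclideanSpace]
  simp_rw [meanCenter_sub_inner_smul_meanCenter hd0 x]
  calc _ ≤ √(2 / d) + 2 / d := by
        simpa [finrank_euclideanSpace] using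
          (orthonormal_normalize_meanCenter_allOnes hd0 hx).integral_angle_sub_sum_inner_smul_le
    _ < 2 * √(1 / (d - 1)) := sqrt_two_div_add_two_div_lt hdR
    _ ≤ _ := by
        gcongr
        exact sqrt_le_arccos_sqrt_one_sub (by rw [div_le_one] <;> linarith)
end

section
/- Let a be a real number with 0 < a ≤ 1/7. Then for every t ∈ [0, 1], arcsin(√t) ≤ arcsin(√a) + (t − a)/(2·√(a·(1 − a))); that is, the tangent line at a to the function g(t) = arccos(√(1 − t)) = arcsin(√t) lies above g on the whole interval [0, 1]. -/
/-!
The derivative of `g t = arcsin √t` is `1 / (2 √(t (1 - t)))`, a decreasing function of `t (1 - t)`.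
For `a ≤ 1/2` it is therefore at least the tangent slope `g' a` on `[0, a]` and on `[1 - a, 1]`,
and at most `g' a` on `[a, 1 - a]`. By the mean value theorem the tangent at `a` lies above `g` on
`[0, 1 - a]`, and on `[1 - a, 1]` it does so as soon as it does at `t = 1`, i.e. as soon as
`π / 2 ≤ arcsin √a + (1 - a) / (2 √(a (1 - a)))`. For `a ≤ 1/7` this endpoint inequality follows
from `√a ≤ arcsin √a`, `π < 3.15` and elementary estimates.
-/

open Real Set

lemma self_le_arcsin {x : ℝ} (h₀ : 0 ≤ x) (h₁ : x ≤ 1) : x ≤ arcsin x :=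
  calc x = sin (arcsin x) := (sin_arcsin (by linarith) h₁).symm
    _ ≤ arcsin x := sin_le (arcsin_nonneg.2 h₀)

lemma hasDerivAt_arcsin_sqrt {x : ℝ} (h₀ : 0 < x) (h₁ : x < 1) :
    HasDerivAt (fun t => arcsin √t) (1 / (2 * √(x * (1 - x)))) x := by
  have h_ne_one : √x ≠ 1 := by rw [Ne, sqrt_eq_one]; exact h₁.ne
  have h_ne_neg_one : √x ≠ -1 := by linarith [sqrt_nonneg x]
  refine ((hasDerivAt_arcsin h_ne_neg_one h_ne_one).comp x
    (hasDerivAt_sqrt h₀.ne')).congr_deriv ?_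
  have : 0 < √(1 - x) := sqrt_pos.2 (by linarith)
  rw [sq_sqrt h₀.le, sqrt_mul h₀.le]
  field_simp

section MeanValue

variable {p q C : ℝ}

lemma differentiableOn_arcsin_sqrt_interior_Icc (hp : 0 ≤ p) (hq : q ≤ 1) :
    DifferentiableOn ℝ (fun t => arcsin √t) (interior (Icc p q)) := by
  rw [interior_Icc]
  exact fun x hx => (hasDerivAt_arcsin_sqrt (by linarith [hx.1]) (by linarith [hx.2]))
    |>.differentiableAt.differentiableWithinAt

lemma arcsin_sqrt_sub_le_mul_sub (hp : 0 ≤ p) (hpq : p ≤ q) (hq : q ≤ 1)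
    (hC : ∀ x ∈ Ioo p q, 1 / (2 * √(x * (1 - x))) ≤ C) :
    arcsin √q - arcsin √p ≤ C * (q - p) := by
  refine (convex_Icc p q).image_sub_le_mul_sub_of_deriv_le (f := fun t => arcsin √t)
    (continuous_arcsin.comp continuous_sqrt).continuousOn
    (differentiableOn_arcsin_sqrt_interior_Icc hp hq) (fun x hx => ?_)
    p (left_mem_Icc.2 hpq) q (right_mem_Icc.2 hpq) hpq
  rw [interior_Icc] at hx
  rw [(hasDerivAt_arcsin_sqrt (by linarith [hx.1]) (by linarith [hx.2])).deriv]
  exact hC x hx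

lemma mul_sub_le_arcsin_sqrt_sub (hp : 0 ≤ p) (hpq : p ≤ q) (hq : q ≤ 1)
    (hC : ∀ x ∈ Ioo p q, C ≤ 1 / (2 * √(x * (1 - x)))) :
    C * (q - p) ≤ arcsin √q - arcsin √p := by
  refine (convex_Icc p q).mul_sub_le_image_sub_of_le_deriv (f := fun t => arcsin √t)
    (continuous_arcsin.comp continuous_sqrt).continuousOn
    (differentiableOn_arcsin_sqrt_interior_Icc hp hq) (fun x hx => ?_)
    p (left_mem_Icc.2 hpq) q (right_mem_Icc.2 hpq) hpq
  rw [interior_Icc] at hx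
  rw [(hasDerivAt_arcsin_sqrt (by linarith [hx.1]) (by linarith [hx.2])).deriv]
  exact hC x hx

end MeanValue

theorem arcsin_sqrt_le_tangent_line_of_le_at_one {a t : ℝ} (ha : 0 < a) (ha₂ : a ≤ 1 / 2)
    (h_one : π / 2 ≤ arcsin √a + (1 - a) / (2 * √(a * (1 - a)))) (ht : t ∈ Icc (0 : ℝ) 1) :
    arcsin √t ≤ arcsin √a + (t - a) / (2 * √(a * (1 - a))) := by
  obtain ⟨ht₀, ht₁⟩ := ht
  set m := 1 / (2 * √(a * (1 - a)))
  have h_tangent : ∀ s, (s - a) / (2 * √(a * (1 - a))) = m * (s - a) := fun s => by ring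
  have hpos : 0 < a * (1 - a) := by nlinarith
  have slope_le : ∀ x, a * (1 - a) ≤ x * (1 - x) → 1 / (2 * √(x * (1 - x))) ≤ m :=
    fun x h => one_div_le_one_div_of_le (by positivity) (by gcongr)
  have le_slope : ∀ x, 0 < x * (1 - x) → x * (1 - x) ≤ a * (1 - a) →
      m ≤ 1 / (2 * √(x * (1 - x))) :=
    fun x hx h => one_div_le_one_div_of_le (by positivity) (by gcongr)
  rw [h_tangent] at h_one ⊢
  rcases le_total t a with hta | hat
  · have := mul_sub_le_arcsin_sqrt_sub ht₀ hta (by linarith) fun x hx =>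
      le_slope x (by nlinarith [hx.1, hx.2]) (by nlinarith [hx.1, hx.2])
    linarith
  rcases le_total t (1 - a) with hta' | hat'
  · have := arcsin_sqrt_sub_le_mul_sub ha.le hat (by linarith) fun x hx =>
      slope_le x (by nlinarith [hx.1, hx.2])
    linarith
  · have := mul_sub_le_arcsin_sqrt_sub ht₀ ht₁ le_rfl fun x hx =>
      le_slope x (by nlinarith [hx.1, hx.2]) (by nlinarith [hx.1, hx.2])
    rw [sqrt_one, arcsin_one] at this
    linarith

theorem pi_div_two_le_arcsin_sqrt_add {a : ℝ} (ha : 0 < a) (ha₇ : a ≤ 1 / 7) :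
    π / 2 ≤ arcsin √a + (1 - a) / (2 * √(a * (1 - a))) := by
  set u := √a
  have hu : 0 < u := sqrt_pos.2 ha
  have hu_le : u ≤ 0.378 := by nlinarith [sq_sqrt ha.le]
  have hw : 0.92 ≤ √(1 - a) := (le_sqrt' (by norm_num)).2 (by linarith)
  have h_slope : (1 - a) / (2 * √(a * (1 - a))) = √(1 - a) / (2 * u) := by
    have : 0 < √(1 - a) := sqrt_pos.2 (by linarith)
    rw [sqrt_mul ha.le]
    field_simp
    rw [sq_sqrt (by linarith)]
    ring
  -- `2 u² - 3.15 u + 0.92` is decreasing on `[0, 0.378]` and still positive at `0.378`.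
  have h_quad : π * u ≤ 2 * u ^ 2 + √(1 - a) := by
    nlinarith [pi_lt_d2, mul_nonneg (sub_nonneg.2 hu_le) hu.le]
  have h_endpoint : π / 2 ≤ u + √(1 - a) / (2 * u) := by
    rw [show u + √(1 - a) / (2 * u) = (2 * u ^ 2 + √(1 - a)) / (2 * u) by field_simp,
      le_div_iff₀ (by positivity)]
    linarith
  rw [h_slope]
  linarith [self_le_arcsin (sqrt_nonneg a) (sqrt_le_one.2 (by linarith))]

/-- **Tangent-line majorization for `g(t) = arcsin √t`.** For `0 < a ≤ 1/7` and all
`t ∈ [0, 1]`, the tangent line to `g` at `a` lies above `g`: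
`arcsin √t ≤ arcsin √a + (t − a)/(2 √(a(1 − a)))`. -/
theorem arcsin_sqrt_tangent_line_bound (a : ℝ) (ha : 0 < a) (ha' : a ≤ 1 / 7)
    (t : ℝ) (ht : t ∈ Set.Icc (0 : ℝ) 1) :
    Real.arcsin (Real.sqrt t)
      ≤ Real.arcsin (Real.sqrt a) + (t - a) / (2 * Real.sqrt (a * (1 - a))) :=
  arcsin_sqrt_le_tangent_line_of_le_at_one ha (by linarith)
    (pi_div_two_le_arcsin_sqrt_add ha ha') ht
end
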